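/- arXiv:2007.07951 — 2 statements merged into one kernel-verified Lean document; each statement's English description precedes it below -/
import Mathlib

section
/- For every integer $N \geq 3$ and every integer $n \geq 1$, $N(n^{1/N} - 1) \leq n^{2/\sqrt{N}} + 2\log n$. -/
open Real

lemma quartic_le_exp {u : ℝ} (hu : 0 ≤ u) :
    1 + u + u^2/2 + u^3/6 + u^4/24 ≤ Real.exp u := by
  have h := Real.sum_le_exp_of_nonneg hu 5
  simp [Finset.sum_range_succ, Nat.factorial] at h
  nlinarith [h]

lemma key {s u : ℝ} (hs : 1.7 ≤ s) (hu : s * Real.log 2 ≤ u) :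
    s * u ≤ Real.exp u := by
  have hl : (0.6931 : ℝ) ≤ Real.log 2 := by
    have := Real.log_two_gt_d9
    linarith
  have hs0 : (0:ℝ) < s := by linarith
  have h1 : s * 0.6931 ≤ u := le_trans (by nlinarith) hu
  have hu0 : (0:ℝ) ≤ u := by nlinarith
  have hq := quartic_le_exp hu0
  nlinarith [sq_nonneg (u - 1), sq_nonneg (u - 2), sq_nonneg (u*u - 3*u), sq_nonneg u, mul_nonneg hu0 hu0]

theorem stmt3 (N n : ℕ) (hN : 3 ≤ N) (hn : 1 ≤ n) :
    (N : ℝ) * ((n : ℝ) ^ (1 / (N : ℝ)) - 1) ≤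
      (n : ℝ) ^ (2 / Real.sqrt N) + 2 * Real.log n := by
  have hn1 : (1:ℝ) ≤ (n:ℝ) := by exact_mod_cast hn
  have npos : (0:ℝ) < (n:ℝ) := by linarith
  set x := Real.log n with hxdef
  have hx : 0 ≤ x := Real.log_nonneg hn1
  have hNpos : (0:ℝ) < (N:ℝ) := by positivity
  have hN3 : (3:ℝ) ≤ (N:ℝ) := by exact_mod_cast hN
  have hr1 : (n:ℝ) ^ (1 / (N:ℝ)) = Real.exp (x / N) := by
    rw [Real.rpow_def_of_pos npos, hxdef]; ring_nf
  have hs0 : 0 < Real.sqrt N := Real.sqrt_pos.2 hNpos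
  have hr2 : (n:ℝ) ^ (2 / Real.sqrt N) = Real.exp (2 * x / Real.sqrt N) := by
    rw [Real.rpow_def_of_pos npos, hxdef]; ring_nf
  rw [hr1, hr2]
  -- Step 1: N * (exp (x/N) - 1) ≤ x * exp (x/N)
  have ht : 0 ≤ x / N := by positivity
  have h1 : (N:ℝ) * (Real.exp (x / N) - 1) ≤ x * Real.exp (x / N) := by
    have hep : 0 < Real.exp (x / N) := Real.exp_pos _
    have hi : -(x / N) + 1 ≤ (Real.exp (x / N))⁻¹ := by
      rw [← Real.exp_neg]; exact Real.add_one_le_exp _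
    have hkey : (1 - x / N) * Real.exp (x / N) ≤ 1 := by
      have h2 := mul_le_mul_of_nonneg_right hi hep.le
      rw [inv_mul_cancel₀ (ne_of_gt hep)] at h2
      linarith [h2]
    have h3 := mul_le_mul_of_nonneg_left hkey hNpos.le
    have hexpand : (N:ℝ) * ((1 - x / N) * Real.exp (x / N))
        = N * Real.exp (x / N) - x * Real.exp (x / N) := by
      field_simp
    rw [hexpand] at h3
    linarith
  refine h1.trans ?_
  by_cases hcase : x ≤ N * Real.log 2
  · have he2 : Real.exp (x / N) ≤ 2 := by
      rw [← Real.exp_log (by norm_num : (0:ℝ) < 2)]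
      apply Real.exp_le_exp.2
      rw [div_le_iff₀ hNpos]
      linarith [hcase]
    have : x * Real.exp (x / N) ≤ 2 * x := by
      nlinarith [Real.exp_pos (x/N)]
    have hpos : 0 < Real.exp (2 * x / Real.sqrt N) := Real.exp_pos _
    linarith
  · push_neg at hcase
    set s := Real.sqrt N with hsdef
    have hss : s * s = N := Real.mul_self_sqrt hNpos.le
    have hs17 : (1.7:ℝ) ≤ s := by
      rw [hsdef]
      have : (1.7:ℝ) = Real.sqrt (1.7^2) := by
        rw [Real.sqrt_sq]; norm_num
      rw [this]
      apply Real.sqrt_le_sqrt; nlinarith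
    have hsN : s ≤ N := by nlinarith
    have hu : s * Real.log 2 ≤ x / s := by
      rw [le_div_iff₀ hs0]
      nlinarith [hcase]
    have hk := key hs17 hu
    have hx_le : x ≤ Real.exp (x / s) := by
      have : s * (x / s) = x := by field_simp
      linarith [hk, this ▸ hk]
    have he12 : Real.exp (x / N) ≤ Real.exp (x / s) := by
      apply Real.exp_le_exp.2
      apply div_le_div_of_nonneg_left hx hs0 hsN |>.trans_eq rfl
    have hprod : x * Real.exp (x / N) ≤ Real.exp (x / s) * Real.exp (x / s) := by
      apply mul_le_mul hx_le he12 (Real.exp_pos _).le (Real.exp_pos _).le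
    have hexp2 : Real.exp (x / s) * Real.exp (x / s) = Real.exp (2 * x / s) := by
      rw [← Real.exp_add]; ring_nf
    rw [hexp2] at hprod
    linarith
end

section
/- There exists a constant $C$ such that: if $W_1 \subseteq W_2$ are simply connected proper subdomains of $\mathbb{C}$, $z \in W_1$, and the hyperbolic distance in $W_2$ from $z$ to $W_2 \setminus W_1$ is at least $R \geq 1$, then the hyperbolic densities satisfy $\rho_{W_2}(z) \leq \rho_{W_1}(z) \leq (1 + C e^{-2R})\, \rho_{W_2}(z)$. -/
open Complex Metric

/-- The hyperbolic distance between two points of the unit disk, for the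
hyperbolic metric with density `1/(1-|z|^2)`. -/
noncomputable def diskDist (a b : ℂ) : ℝ :=
  (1 / 2) * Real.log ((1 + ‖(a - b) / (1 - (starRingEnd ℂ) b * a)‖) /
    (1 - ‖(a - b) / (1 - (starRingEnd ℂ) b * a)‖))

/-- `f` is a Riemann map of the unit disk onto the simply connected domain `W`,
and `ρ` is the corresponding hyperbolic density of `W` (normalized so that the
unit disk has density `1/(1-|z|^2)`). -/
structure RiemannData (W : Set ℂ) (ρ : ℂ → ℝ) (f : ℂ → ℂ) : Prop where
  diff : DifferentiableOn ℂ f (ball 0 1)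
  inj : Set.InjOn f (ball 0 1)
  image : f '' ball 0 1 = W
  density : ∀ w ∈ ball (0 : ℂ) 1,
    ρ (f w) * ‖deriv f w‖ = 1 / (1 - ‖w‖ ^ 2)

noncomputable def mob (a u : ℂ) : ℂ := (u - a) / (1 - (starRingEnd ℂ) a * u)

lemma denom_ne {a u : ℂ} (ha : ‖a‖ < 1) (hu : ‖u‖ ≤ 1) :
    (1 : ℂ) - (starRingEnd ℂ) a * u ≠ 0 := by
  intro h
  have h1 : (starRingEnd ℂ) a * u = 1 := by linear_combination -h
  have h2 : ‖(starRingEnd ℂ) a * u‖ < 1 := by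
    rw [norm_mul, Complex.norm_conj]
    nlinarith [norm_nonneg u, norm_nonneg a]
  rw [h1] at h2; simp at h2

lemma normSq_identity (a u : ℂ) :
    Complex.normSq (1 - (starRingEnd ℂ) a * u) - Complex.normSq (u - a)
      = (1 - Complex.normSq a) * (1 - Complex.normSq u) := by
  simp only [Complex.normSq_apply, Complex.sub_re, Complex.sub_im, Complex.one_re,
    Complex.one_im, Complex.mul_re, Complex.mul_im, Complex.conj_re, Complex.conj_im]
  ring

lemma abs_mob_lt {a u : ℂ} (ha : ‖a‖ < 1) (hu : ‖u‖ < 1) :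
    ‖mob a u‖ < 1 := by
  have hd := denom_ne ha hu.le
  have h1 : Complex.normSq a < 1 := by
    rw [← Complex.sq_norm]; nlinarith [norm_nonneg a]
  have h2 : Complex.normSq u < 1 := by
    rw [← Complex.sq_norm]; nlinarith [norm_nonneg u]
  have key : Complex.normSq (u - a) < Complex.normSq (1 - (starRingEnd ℂ) a * u) := by
    nlinarith [normSq_identity a u]
  have hsq : ‖mob a u‖ ^ 2 < 1 := by
    rw [mob, norm_div, div_pow, Complex.sq_norm, Complex.sq_norm,
      div_lt_one (Complex.normSq_pos.2 hd)]
    exact key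
  nlinarith [norm_nonneg (mob a u)]

lemma hasDerivAt_mob (a : ℂ) {u : ℂ} (hd : (1 : ℂ) - (starRingEnd ℂ) a * u ≠ 0) :
    HasDerivAt (mob a) ((1 - (starRingEnd ℂ) a * a) / (1 - (starRingEnd ℂ) a * u) ^ 2) u := by
  have h1 : HasDerivAt (fun v : ℂ => v - a) 1 u := (hasDerivAt_id u).sub_const a
  have h2 : HasDerivAt (fun v : ℂ => 1 - (starRingEnd ℂ) a * v) (-((starRingEnd ℂ) a)) u := by
    simpa using ((hasDerivAt_id u).const_mul ((starRingEnd ℂ) a)).const_sub 1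
  have h3 := h1.div h2 hd
  have e : (1 - (starRingEnd ℂ) a * a) / (1 - (starRingEnd ℂ) a * u) ^ 2
      = (1 * (1 - (starRingEnd ℂ) a * u) - (u - a) * -(starRingEnd ℂ) a)
        / (1 - (starRingEnd ℂ) a * u) ^ 2 := by congr 1; ring
  rw [e]; exact h3

lemma mob_neg_mob {a u : ℂ} (ha : ‖a‖ < 1) (hu : ‖u‖ < 1) :
    mob a (mob (-a) u) = u := by
  have hna : ‖-a‖ < 1 := by simpa using ha
  have h1 : (1 : ℂ) + (starRingEnd ℂ) a * u ≠ 0 := by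
    have := denom_ne hna hu.le
    rwa [map_neg, neg_mul, sub_neg_eq_add] at this
  have h2 : (1 : ℂ) - (starRingEnd ℂ) a * a ≠ 0 := denom_ne ha ha.le
  have e0 : mob (-a) u = (u + a) / (1 + (starRingEnd ℂ) a * u) := by
    rw [mob, map_neg]; congr 1 <;> ring
  have e1 : mob (-a) u - a
      = u * ((1 - (starRingEnd ℂ) a * a) / (1 + (starRingEnd ℂ) a * u)) := by
    rw [e0, div_sub' h1, mul_div_assoc']; congr 1; ring
  have e2 : (1 : ℂ) - (starRingEnd ℂ) a * mob (-a) u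
      = (1 - (starRingEnd ℂ) a * a) / (1 + (starRingEnd ℂ) a * u) := by
    rw [e0]; field_simp; ring
  rw [mob, e1, e2, mul_div_cancel_right₀ u (div_ne_zero h2 h1)]

lemma abs_ratio_symm (p q : ℂ) :
    ‖(p - q) / (1 - (starRingEnd ℂ) q * p)‖
      = ‖(q - p) / (1 - (starRingEnd ℂ) p * q)‖ := by
  have hc : (starRingEnd ℂ) (1 - (starRingEnd ℂ) q * p) = 1 - (starRingEnd ℂ) p * q := by
    rw [map_sub, map_one, map_mul, Complex.conj_conj]; ring
  rw [norm_div, norm_div, ← Complex.norm_conj (1 - (starRingEnd ℂ) q * p), hc,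
    norm_sub_rev p q]


lemma mem_ball_abs {u : ℂ} (hu : u ∈ ball (0 : ℂ) 1) : ‖u‖ < 1 := by
  simpa using mem_ball_zero_iff.1 hu

lemma abs_mem_ball {u : ℂ} (hu : ‖u‖ < 1) : u ∈ ball (0 : ℂ) 1 := by
  rw [mem_ball_zero_iff]; simpa using hu

lemma RiemannData.strictDeriv {W : Set ℂ} {ρ : ℂ → ℝ} {f : ℂ → ℂ} (hf : RiemannData W ρ f)
    {u : ℂ} (hu : u ∈ ball (0 : ℂ) 1) : HasStrictDerivAt f (deriv f u) u := by
  obtain ⟨p, hp⟩ := hf.diff.analyticAt (isOpen_ball.mem_nhds hu)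
  have h2 := hp.hasStrictDerivAt
  rwa [← h2.hasDerivAt.deriv] at h2

lemma RiemannData.deriv_ne {W : Set ℂ} {ρ : ℂ → ℝ} {f : ℂ → ℂ} (hf : RiemannData W ρ f)
    {u : ℂ} (hu : u ∈ ball (0 : ℂ) 1) : deriv f u ≠ 0 := by
  intro h0
  have heq := hf.density u hu
  rw [h0] at heq
  simp only [norm_zero, mul_zero] at heq
  have hu1 : ‖u‖ < 1 := mem_ball_abs hu
  have hpos : 0 < 1 - ‖u‖ ^ 2 := by nlinarith [norm_nonneg u]
  exact one_div_ne_zero hpos.ne' heq.symm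

lemma one_sub_sq_pos {u : ℂ} (hu : ‖u‖ < 1) : 0 < 1 - ‖u‖ ^ 2 := by
  nlinarith [norm_nonneg u]

lemma abs_one_sub_conj_mul_self {a : ℂ} :
    ‖1 - (starRingEnd ℂ) a * a‖ = 1 - ‖a‖ ^ 2 ∨ True := Or.inr trivial

lemma key_s11 {W : Set ℂ} {ρ : ℂ → ℝ} {f : ℂ → ℂ} (hf : RiemannData W ρ f)
    {h : ℂ → ℂ} (hd : DifferentiableOn ℂ h (ball 0 1))
    (hmaps : Set.MapsTo h (ball 0 1) W) :
    ρ (h 0) * ‖deriv h 0‖ ≤ 1 := by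
  classical
  set g : ℂ → ℂ := Function.invFunOn f (ball 0 1) with hg
  have hginv : ∀ x ∈ ball (0 : ℂ) 1, g (f x) = x := fun x hx =>
    hf.inj.leftInvOn_invFunOn hx
  have hgstrict : ∀ u ∈ ball (0 : ℂ) 1, HasStrictDerivAt g (deriv f u)⁻¹ (f u) := by
    intro u hu
    exact (hf.strictDeriv hu).to_local_left_inverse (hf.deriv_ne hu)
      (by filter_upwards [isOpen_ball.mem_nhds hu] with x hx using hginv x hx)
  set G : ℂ → ℂ := fun w => g (h w) with hGdef
  have hG : ∀ w ∈ ball (0 : ℂ) 1, ∃ u ∈ ball (0 : ℂ) 1, f u = h w ∧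
      HasDerivAt G ((deriv f u)⁻¹ * deriv h w) w := by
    intro w hw
    have hW : h w ∈ f '' ball (0 : ℂ) 1 := by rw [hf.image]; exact hmaps hw
    obtain ⟨u, hu, hfu⟩ := hW
    refine ⟨u, hu, hfu, ?_⟩
    have hgd := (hgstrict u hu).hasDerivAt
    rw [hfu] at hgd
    exact hgd.comp w ((hd.differentiableAt (isOpen_ball.mem_nhds hw)).hasDerivAt)
  have hGmaps : Set.MapsTo G (ball 0 1) (ball (0 : ℂ) 1) := by
    intro w hw
    have hW : h w ∈ f '' ball (0 : ℂ) 1 := by rw [hf.image]; exact hmaps hw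
    obtain ⟨u, hu, hfu⟩ := hW
    exact Function.invFunOn_mem ⟨u, hu, hfu⟩
  obtain ⟨a, ha, hfa, hG0⟩ := hG 0 (mem_ball_self one_pos)
  have haabs : ‖a‖ < 1 := mem_ball_abs ha
  have hG0eq : G 0 = a := by
    show g (h 0) = a
    rw [← hfa, hginv a ha]
  have hden : (1 : ℂ) - (starRingEnd ℂ) a * a ≠ 0 := denom_ne haabs haabs.le
  set F : ℂ → ℂ := fun w => mob a (G w) with hFdef
  have hFd : DifferentiableOn ℂ F (ball 0 1) := by
    intro w hw
    obtain ⟨u, hu, hfu, hGd⟩ := hG w hw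
    have hGw : ‖G w‖ < 1 := mem_ball_abs (hGmaps hw)
    exact (((hasDerivAt_mob a (denom_ne haabs hGw.le)).comp w hGd).differentiableAt).differentiableWithinAt
  have hFmaps : Set.MapsTo F (ball 0 1) (ball (0 : ℂ) 1) := fun w hw =>
    abs_mem_ball (abs_mob_lt haabs (mem_ball_abs (hGmaps hw)))
  have hF0 : F 0 = 0 := by
    show mob a (G 0) = 0
    rw [hG0eq, mob]
    simp
  have hFderiv : HasDerivAt F
      ((1 - (starRingEnd ℂ) a * a) / (1 - (starRingEnd ℂ) a * a) ^ 2
        * ((deriv f a)⁻¹ * deriv h 0)) 0 := by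
    have hm := hasDerivAt_mob a (u := G 0) (by rw [hG0eq]; exact hden)
    have hc := hm.comp 0 hG0
    rw [hG0eq] at hc
    exact hc
  have hsch : ‖deriv F 0‖ ≤ 1 := by
    exact Complex.norm_deriv_le_one_of_mapsTo_ball hFd (fun w hw => by rw [hF0]; exact ball_subset_closedBall (hFmaps hw)) one_pos
  rw [hFderiv.deriv] at hsch
  have habs1c : ‖1 - (starRingEnd ℂ) a * a‖ = 1 - ‖a‖ ^ 2 := by
    have h1 : (starRingEnd ℂ) a * a = (Complex.normSq a : ℂ) := by
      rw [mul_comm, Complex.mul_conj]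
    rw [h1, ← Complex.ofReal_one, ← Complex.ofReal_sub, Complex.norm_real, Real.norm_eq_abs,
      abs_of_pos (by rw [← Complex.sq_norm]; exact one_sub_sq_pos haabs), Complex.sq_norm]
  have hA : 0 < 1 - ‖a‖ ^ 2 := one_sub_sq_pos haabs
  have hD : 0 < ‖deriv f a‖ := norm_pos_iff.2 (hf.deriv_ne ha)
  have hsch2 : (1 - ‖a‖ ^ 2)⁻¹
      * ((‖deriv f a‖)⁻¹ * ‖deriv h 0‖) ≤ 1 := by
    have hsimp : ‖(1 - (starRingEnd ℂ) a * a) / (1 - (starRingEnd ℂ) a * a) ^ 2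
        * ((deriv f a)⁻¹ * deriv h 0)‖
        = (1 - ‖a‖ ^ 2)⁻¹
          * ((‖deriv f a‖)⁻¹ * ‖deriv h 0‖) := by
      rw [norm_mul, norm_div, norm_pow, norm_mul, norm_inv, habs1c]
      field_simp
    rwa [hsimp] at hsch
  have hde := hf.density a ha
  rw [hfa] at hde
  have hρ : ρ (h 0) = 1 / ((1 - ‖a‖ ^ 2) * ‖deriv f a‖) := by
    field_simp at hde ⊢
    linear_combination hde
  rw [hρ]
  calc 1 / ((1 - ‖a‖ ^ 2) * ‖deriv f a‖) * ‖deriv h 0‖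
      = (1 - ‖a‖ ^ 2)⁻¹ * ((‖deriv f a‖)⁻¹ * ‖deriv h 0‖) := by
        rw [one_div, mul_inv]; ring
    _ ≤ 1 := hsch2
lemma abs_one_sub_conj_self {a : ℂ} (ha : ‖a‖ < 1) :
    ‖1 - (starRingEnd ℂ) a * a‖ = 1 - ‖a‖ ^ 2 := by
  have h1 : (starRingEnd ℂ) a * a = (Complex.normSq a : ℂ) := by
    rw [mul_comm, Complex.mul_conj]
  rw [h1, ← Complex.ofReal_one, ← Complex.ofReal_sub, Complex.norm_real, Real.norm_eq_abs,
    abs_of_pos (by rw [← Complex.sq_norm]; exact one_sub_sq_pos ha), Complex.sq_norm]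

theorem stmt11 : ∃ C : ℝ, 0 < C ∧
    ∀ (W₁ W₂ : Set ℂ) (ρ₁ ρ₂ : ℂ → ℝ) (f₁ f₂ : ℂ → ℂ),
      RiemannData W₁ ρ₁ f₁ → RiemannData W₂ ρ₂ f₂ → W₁ ⊆ W₂ →
      ∀ z ∈ W₁, ∀ R : ℝ, 1 ≤ R →
      (∀ a ∈ ball (0 : ℂ) 1, f₂ a = z →
        ∀ b ∈ ball (0 : ℂ) 1, f₂ b ∉ W₁ → R ≤ diskDist a b) →
      ρ₂ z ≤ ρ₁ z ∧ ρ₁ z ≤ (1 + C * Real.exp (-2 * R)) * ρ₂ z := by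
  refine ⟨3, by norm_num, ?_⟩
  intro W₁ W₂ ρ₁ ρ₂ f₁ f₂ hf₁ hf₂ hsub z hz R hR hdist
  have hz1 : z ∈ f₁ '' ball 0 1 := by rw [hf₁.image]; exact hz
  obtain ⟨a₁, ha₁, hfa₁⟩ := hz1
  have hz2 : z ∈ f₂ '' ball 0 1 := by rw [hf₂.image]; exact hsub hz
  obtain ⟨b₀, hb₀, hfb₀⟩ := hz2
  have ha₁a : ‖a₁‖ < 1 := mem_ball_abs ha₁
  have hb₀a : ‖b₀‖ < 1 := mem_ball_abs hb₀
  have hna₁ : ‖-a₁‖ < 1 := by simpa using ha₁a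
  have hnb₀ : ‖-b₀‖ < 1 := by simpa using hb₀a
  have hA₁ : 0 < 1 - ‖a₁‖ ^ 2 := one_sub_sq_pos ha₁a
  have hA₂ : 0 < 1 - ‖b₀‖ ^ 2 := one_sub_sq_pos hb₀a
  have hD₁ : 0 < ‖deriv f₁ a₁‖ := norm_pos_iff.2 (hf₁.deriv_ne ha₁)
  have hD₂ : 0 < ‖deriv f₂ b₀‖ := norm_pos_iff.2 (hf₂.deriv_ne hb₀)
  have hden₁ : ρ₁ z * ‖deriv f₁ a₁‖ * (1 - ‖a₁‖ ^ 2) = 1 := by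
    have hde := hf₁.density a₁ ha₁
    rw [hfa₁, eq_div_iff hA₁.ne'] at hde
    exact hde
  have hden₂ : ρ₂ z * ‖deriv f₂ b₀‖ * (1 - ‖b₀‖ ^ 2) = 1 := by
    have hde := hf₂.density b₀ hb₀
    rw [hfb₀, eq_div_iff hA₂.ne'] at hde
    exact hde
  have hρ₂pos : 0 < ρ₂ z := by nlinarith [mul_pos hD₂ hA₂]
  -- Lower bound
  have hlow : ρ₂ z ≤ ρ₁ z := by
    set h : ℂ → ℂ := fun w => f₁ (mob (-a₁) w) with hhdef
    have hmob0 : mob (-a₁) 0 = a₁ := by rw [mob]; simp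
    have hmobmem : ∀ w ∈ ball (0 : ℂ) 1, mob (-a₁) w ∈ ball (0 : ℂ) 1 := fun w hw =>
      abs_mem_ball (abs_mob_lt hna₁ (mem_ball_abs hw))
    have hderiv_w : ∀ w ∈ ball (0 : ℂ) 1, HasDerivAt h
        (deriv f₁ (mob (-a₁) w) *
          ((1 - (starRingEnd ℂ) (-a₁) * (-a₁)) / (1 - (starRingEnd ℂ) (-a₁) * w) ^ 2)) w := by
      intro w hw
      exact ((hf₁.diff.differentiableAt
          (isOpen_ball.mem_nhds (hmobmem w hw))).hasDerivAt).comp w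
        (hasDerivAt_mob (-a₁) (denom_ne hna₁ (mem_ball_abs hw).le))
    have hhd : DifferentiableOn ℂ h (ball 0 1) := fun w hw =>
      ((hderiv_w w hw).differentiableAt).differentiableWithinAt
    have hhmaps : Set.MapsTo h (ball 0 1) W₂ := fun w hw => hsub (by
      rw [← hf₁.image]; exact ⟨_, hmobmem w hw, rfl⟩)
    have h0 : h 0 = z := by show f₁ (mob (-a₁) 0) = z; rw [hmob0, hfa₁]
    have hkey₂ := key_s11 hf₂ hhd hhmaps
    have hd0 := hderiv_w 0 (mem_ball_self one_pos)
    rw [hmob0] at hd0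
    have hd0' : deriv h 0 = deriv f₁ a₁ * (1 - (starRingEnd ℂ) a₁ * a₁) := by
      rw [hd0.deriv]
      simp [map_neg]
    rw [h0, hd0', norm_mul, abs_one_sub_conj_self ha₁a] at hkey₂
    have hmul : ρ₂ z * (‖deriv f₁ a₁‖ * (1 - ‖a₁‖ ^ 2))
        ≤ ρ₁ z * (‖deriv f₁ a₁‖ * (1 - ‖a₁‖ ^ 2)) := by
      rw [show ρ₁ z * (‖deriv f₁ a₁‖ * (1 - ‖a₁‖ ^ 2))
        = ρ₁ z * ‖deriv f₁ a₁‖ * (1 - ‖a₁‖ ^ 2) from by ring, hden₁]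
      exact hkey₂
    exact le_of_mul_le_mul_right hmul (by positivity)
  refine ⟨hlow, ?_⟩
  have hρ₁pos : 0 < ρ₁ z := lt_of_lt_of_le hρ₂pos hlow
  -- Upper bound
  set E : ℝ := Real.exp (2 * R) with hEdef
  have hE3 : 3 ≤ E := by nlinarith [Real.add_one_le_exp (2 * R)]
  set r : ℝ := (E - 1) / (E + 1) with hrdef
  have hr0 : 0 < r := by apply div_pos <;> linarith
  have hr1 : r < 1 := by rw [div_lt_one (by linarith)]; linarith
  have hu_small : ∀ w ∈ ball (0 : ℂ) 1, ‖(r : ℂ) * w‖ < r := by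
    intro w hw
    rw [norm_mul, Complex.norm_real, Real.norm_eq_abs, abs_of_pos hr0]
    calc r * ‖w‖ < r * 1 := by
          exact mul_lt_mul_of_pos_left (mem_ball_abs hw) hr0
      _ = r := mul_one r
  have hu1 : ∀ w ∈ ball (0 : ℂ) 1, ‖(r : ℂ) * w‖ < 1 := fun w hw =>
    lt_trans (hu_small w hw) hr1
  set h : ℂ → ℂ := fun w => f₂ (mob (-b₀) ((r : ℂ) * w)) with hhdef
  have hxmem : ∀ w ∈ ball (0 : ℂ) 1, mob (-b₀) ((r : ℂ) * w) ∈ ball (0 : ℂ) 1 := fun w hw =>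
    abs_mem_ball (abs_mob_lt hnb₀ (hu1 w hw))
  have hinner : ∀ w ∈ ball (0 : ℂ) 1, HasDerivAt (fun v => mob (-b₀) ((r : ℂ) * v))
      ((1 - (starRingEnd ℂ) (-b₀) * (-b₀))
        / (1 - (starRingEnd ℂ) (-b₀) * ((r : ℂ) * w)) ^ 2 * (r : ℂ)) w := by
    intro w hw
    have h1 : HasDerivAt (fun v : ℂ => (r : ℂ) * v) (r : ℂ) w := by
      simpa using (hasDerivAt_id w).const_mul (r : ℂ)
    exact (hasDerivAt_mob (-b₀) (denom_ne hnb₀ (hu1 w hw).le)).comp w h1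
  have hderiv_w : ∀ w ∈ ball (0 : ℂ) 1, HasDerivAt h
      (deriv f₂ (mob (-b₀) ((r : ℂ) * w)) *
        ((1 - (starRingEnd ℂ) (-b₀) * (-b₀))
          / (1 - (starRingEnd ℂ) (-b₀) * ((r : ℂ) * w)) ^ 2 * (r : ℂ))) w := by
    intro w hw
    exact ((hf₂.diff.differentiableAt
        (isOpen_ball.mem_nhds (hxmem w hw))).hasDerivAt).comp w (hinner w hw)
  have hhd : DifferentiableOn ℂ h (ball 0 1) := fun w hw =>
    ((hderiv_w w hw).differentiableAt).differentiableWithinAt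
  have hmob0 : mob (-b₀) ((r : ℂ) * 0) = b₀ := by rw [mul_zero, mob]; simp
  have h0 : h 0 = z := by show f₂ (mob (-b₀) ((r : ℂ) * 0)) = z; rw [hmob0, hfb₀]
  have hhmaps : Set.MapsTo h (ball 0 1) W₁ := by
    intro w hw
    by_contra hnot
    have hRle := hdist b₀ hb₀ hfb₀ (mob (-b₀) ((r : ℂ) * w)) (hxmem w hw) hnot
    set t : ℝ := ‖(r : ℂ) * w‖ with htdef
    have habsq : ‖(b₀ - mob (-b₀) ((r : ℂ) * w))
        / (1 - (starRingEnd ℂ) (mob (-b₀) ((r : ℂ) * w)) * b₀)‖ = t := by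
      rw [abs_ratio_symm]
      show ‖mob b₀ (mob (-b₀) ((r : ℂ) * w))‖ = t
      rw [mob_neg_mob hb₀a (hu1 w hw)]
    have ht0 : 0 ≤ t := norm_nonneg _
    have htr : t < r := hu_small w hw
    have ht1 : t < 1 := lt_trans htr hr1
    have hdd : diskDist b₀ (mob (-b₀) ((r : ℂ) * w)) = (1 / 2) * Real.log ((1 + t) / (1 - t)) := by
      rw [diskDist, habsq]
    have hq : (1 + t) / (1 - t) < E := by
      rw [div_lt_iff₀ (by linarith)]
      have := (lt_div_iff₀ (by linarith : (0:ℝ) < E + 1)).1 htr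
      nlinarith
    have hloglt : Real.log ((1 + t) / (1 - t)) < 2 * R := by
      have hlog := Real.log_lt_log (div_pos (by linarith) (by linarith)) hq
      rwa [hEdef, Real.log_exp] at hlog
    rw [hdd] at hRle
    linarith
  have hkey₁ := key_s11 hf₁ hhd hhmaps
  have hd0 := hderiv_w 0 (mem_ball_self one_pos)
  rw [hmob0] at hd0
  have hd0' : deriv h 0 = deriv f₂ b₀ * ((1 - (starRingEnd ℂ) b₀ * b₀) * (r : ℂ)) := by
    rw [hd0.deriv]
    simp [map_neg]
  rw [h0, hd0', norm_mul, norm_mul, abs_one_sub_conj_self hb₀a, Complex.norm_real, Real.norm_eq_abs,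
    abs_of_pos hr0] at hkey₁
  have hcancel : ρ₁ z * r ≤ ρ₂ z := by
    have hm := mul_le_mul_of_nonneg_left hkey₁ hρ₂pos.le
    have e : ρ₂ z * (ρ₁ z * (‖deriv f₂ b₀‖ * ((1 - ‖b₀‖ ^ 2) * r)))
        = ρ₁ z * r * (ρ₂ z * ‖deriv f₂ b₀‖ * (1 - ‖b₀‖ ^ 2)) := by ring
    rw [e, hden₂, mul_one, mul_one] at hm
    exact hm
  have hs : Real.exp (-2 * R) * E = 1 := by
    rw [hEdef, ← Real.exp_add, show -2 * R + 2 * R = 0 from by ring, Real.exp_zero]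
  have hspos : 0 < Real.exp (-2 * R) := Real.exp_pos _
  have h1r : 1 ≤ (1 + 3 * Real.exp (-2 * R)) * r := by
    rw [hrdef, mul_div_assoc', le_div_iff₀ (by linarith : (0:ℝ) < E + 1)]
    nlinarith [mul_nonneg hspos.le (by linarith : (0:ℝ) ≤ E - 3)]
  calc ρ₁ z = ρ₁ z * 1 := (mul_one _).symm
    _ ≤ ρ₁ z * ((1 + 3 * Real.exp (-2 * R)) * r) :=
        mul_le_mul_of_nonneg_left h1r hρ₁pos.le
    _ = (1 + 3 * Real.exp (-2 * R)) * (ρ₁ z * r) := by ring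
    _ ≤ (1 + 3 * Real.exp (-2 * R)) * ρ₂ z :=
        mul_le_mul_of_nonneg_left hcancel (by positivity)
end
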